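/- arXiv:2207.12110 — 3 statements merged into one kernel-verified Lean document; each statement's English description precedes it below -/
import Mathlib

section
/- Let G=(V,E) be a digraph on n vertices, r ≥ 0 an integer, and ε ∈ (0,1] a real number. Suppose every vertex of G has in-degree strictly greater than 2r + εn. Then G is r-robust if and only if G is ε-close to r-robustness, i.e., if and only if for every pair of nonempty disjoint subsets A, B ⊆ V with |A| ≥ εn and |B| ≥ εn, at least one of A and B is r-reachable. -/
/-- The set of in-neighbors of `v`: vertices `u` with an edge directed from `u` to `v`. -/
def inNbrs {V : Type*} [Fintype V] (Adj : V → V → Prop) [DecidableRel Adj] (v : V) :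
    Finset V :=
  Finset.univ.filter (fun u => Adj u v)

/-- A nonempty set `S` is `r`-reachable if some `v ∈ S` has at least `r` in-neighbors
outside `S`. -/
def RReachable {V : Type*} [Fintype V] [DecidableEq V] (Adj : V → V → Prop)
    [DecidableRel Adj] (r : ℕ) (S : Finset V) : Prop :=
  ∃ v ∈ S, r ≤ (inNbrs Adj v \ S).card

/-- A digraph is `r`-robust if for every pair of nonempty disjoint vertex subsets,
at least one of them is `r`-reachable. -/
def RRobust {V : Type*} [Fintype V] [DecidableEq V] (Adj : V → V → Prop)
    [DecidableRel Adj] (r : ℕ) : Prop :=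
  ∀ A B : Finset V, A.Nonempty → B.Nonempty → Disjoint A B →
    RReachable Adj r A ∨ RReachable Adj r B

/-- A digraph is `ε`-close to `r`-robustness if every pair of nonempty disjoint vertex
subsets, each of size at least `ε * n`, contains an `r`-reachable set. -/
def CloseRRobust {V : Type*} [Fintype V] [DecidableEq V] (Adj : V → V → Prop)
    [DecidableRel Adj] (r : ℕ) (ε : ℝ) : Prop :=
  ∀ A B : Finset V, A.Nonempty → B.Nonempty → Disjoint A B →
    ε * (Fintype.card V) ≤ (A.card : ℝ) → ε * (Fintype.card V) ≤ (B.card : ℝ) →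
      RReachable Adj r A ∨ RReachable Adj r B

/-
A set with fewer than `εn` vertices is automatically `r`-reachable: any of its vertices has at least
`r + εn` in-neighbours, of which fewer than `εn` lie inside the set. So only pairs of sets
that are both large need to be checked, and these are covered by `ε`-closeness.
-/

section

variable {V : Type*} [Fintype V] [DecidableEq V] {Adj : V → V → Prop} [DecidableRel Adj]
  {r : ℕ}

theorem RRobust.closeRRobust (h : RRobust Adj r) (ε : ℝ) : CloseRRobust Adj r ε :=
  fun A B hA hB hAB _ _ => h A B hA hB hAB

theorem CloseRRobust.rRobust {ε : ℝ} (h : CloseRRobust Adj r ε)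
    (hsmall : ∀ S : Finset V, S.Nonempty → (S.card : ℝ) < ε * Fintype.card V →
      RReachable Adj r S) :
    RRobust Adj r := by
  intro A B hA hB hAB
  by_cases hAsmall : (A.card : ℝ) < ε * Fintype.card V
  · exact .inl (hsmall A hA hAsmall)
  by_cases hBsmall : (B.card : ℝ) < ε * Fintype.card V
  · exact .inr (hsmall B hB hBsmall)
  exact h A B hA hB hAB (not_lt.mp hAsmall) (not_lt.mp hBsmall)

theorem rReachable_of_add_card_le_card_inNbrs {S : Finset V} {v : V} (hv : v ∈ S)
    (h : r + S.card ≤ (inNbrs Adj v).card) : RReachable Adj r S :=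
  ⟨v, hv, by have := Finset.card_le_card_sdiff_add_card (s := inNbrs Adj v) (t := S); omega⟩

theorem rReachable_of_card_lt {ε : ℝ}
    (hdeg : ∀ v : V, (r : ℝ) + ε * Fintype.card V ≤ (inNbrs Adj v).card)
    {S : Finset V} (hS : S.Nonempty) (hcard : (S.card : ℝ) < ε * Fintype.card V) :
    RReachable Adj r S := by
  obtain ⟨v, hv⟩ := hS
  refine rReachable_of_add_card_le_card_inNbrs hv ?_
  have hv_deg := hdeg v
  exact_mod_cast (by linarith : (r : ℝ) + S.card ≤ (inNbrs Adj v).card)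

end

theorem stmt3_general {V : Type*} [Fintype V] [DecidableEq V]
    (Adj : V → V → Prop) [DecidableRel Adj]
    (r : ℕ) (ε : ℝ)
    (hdeg : ∀ v : V, (2 * r : ℝ) + ε * (Fintype.card V) < ((inNbrs Adj v).card : ℝ)) :
    RRobust Adj r ↔ CloseRRobust Adj r ε := by
  have hdeg' (v : V) : (r : ℝ) + ε * Fintype.card V ≤ (inNbrs Adj v).card := by
    linarith [hdeg v, (Nat.cast_nonneg r : (0 : ℝ) ≤ r)]
  exact ⟨fun h => h.closeRRobust ε,
    fun h => h.rRobust fun _ hS hcard => rReachable_of_card_lt hdeg' hS hcard⟩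

theorem stmt3 {V : Type*} [Fintype V] [DecidableEq V]
    (Adj : V → V → Prop) [DecidableRel Adj]
    (hloopless : ∀ v, ¬ Adj v v)
    (r : ℕ) (ε : ℝ) (hε : 0 < ε) (hε1 : ε ≤ 1)
    (hdeg : ∀ v : V, (2 * r : ℝ) + ε * (Fintype.card V) < ((inNbrs Adj v).card : ℝ)) :
    RRobust Adj r ↔ CloseRRobust Adj r ε :=
  stmt3_general Adj r ε hdeg
end

section
/- Let G=(V,E) be a digraph on n ≥ 1 vertices, let (A,B,C) be a partition of V, let v ∈ V be a vertex, and let ε ∈ (0,1], δ ∈ (0,1) be real numbers. Let t be a positive integer with t ≥ (8/ε²)·ln(32/(εδ)), and let U : Fin t → V be t i.i.d. uniform samples from V. Then the probability that v has a bad neighborhood estimate is small: P[ ∃ S ∈ {A∪C, B∪C} such that | |{i ∈ Fin t : U i ∈ N_in(v) ∩ S}|/t − |N_in(v) ∩ S|/n | > ε/4 ] ≤ 4·exp(−ε²t/8) ≤ εδ/8. -/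
open MeasureTheory

/-- The law of `t` i.i.d. uniform samples from a nonempty finite set `V`:
the product over `Fin t` of the uniform probability measure on `V`. -/
noncomputable def sampleMeasure (V : Type*) [Fintype V] [Nonempty V]
    [MeasurableSpace V] (t : ℕ) : Measure (Fin t → V) :=
  Measure.pi (fun _ : Fin t => (PMF.uniformOfFintype V).toMeasure)

section Aux
open Finset Real
open scoped ENNReal

lemma bernoulli_mgf_le {p : ℝ} (hp0 : 0 ≤ p) (hp1 : p ≤ 1) (l : ℝ) :
    p * Real.exp l + (1 - p) ≤ Real.exp (l * p + l ^ 2 / 8) := by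
  set h : ℝ → ℝ := fun x => p * Real.exp x + (1 - p) with hh
  have hpos : ∀ x, 0 < h x := by
    intro x
    have hex := Real.exp_pos x
    rcases eq_or_lt_of_le hp0 with h0 | h0
    · simp [hh, ← h0]
    · have : 0 < p * Real.exp x := mul_pos h0 hex
      simp only [hh]; nlinarith
  set g : ℝ → ℝ := fun x => p * Real.exp x / h x - (p + x / 4) with hg
  set f : ℝ → ℝ := fun x => Real.log (h x) - (p * x + x ^ 2 / 8) with hf
  have hd : ∀ x, HasDerivAt h (p * Real.exp x) x := by
    intro x
    exact ((Real.hasDerivAt_exp x).const_mul p).add_const (1 - p)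
  have hfd : ∀ x, HasDerivAt f (g x) x := by
    intro x
    have h1 : HasDerivAt (fun x => Real.log (h x)) (p * Real.exp x / h x) x :=
      (hd x).log (hpos x).ne'
    have h2 : HasDerivAt (fun x : ℝ => p * x + x ^ 2 / 8) (p * 1 + 2 * x ^ 1 / 8) x :=
      ((hasDerivAt_id x).const_mul p).add ((hasDerivAt_pow 2 x).div_const 8)
    have := h1.sub h2
    refine this.congr_deriv ?_
    simp [hg]; ring
  have hgd : ∀ x, HasDerivAt g (p * Real.exp x * (1 - p) / (h x) ^ 2 - 1 / 4) x := by
    intro x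
    have h1 : HasDerivAt (fun x => p * Real.exp x / h x)
        ((p * Real.exp x * h x - p * Real.exp x * (p * Real.exp x)) / (h x) ^ 2) x :=
      ((Real.hasDerivAt_exp x).const_mul p).div (hd x) (hpos x).ne'
    have h2 : HasDerivAt (fun x : ℝ => p + x / 4) (0 + 1 / 4) x :=
      (hasDerivAt_const x p).add ((hasDerivAt_id x).div_const 4)
    have := h1.sub h2
    refine this.congr_deriv ?_
    have : p * Real.exp x * h x - p * Real.exp x * (p * Real.exp x)
        = p * Real.exp x * (1 - p) := by simp [hh]; ring
    rw [this]; ring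
  have hganti : Antitone g := by
    apply antitone_of_deriv_nonpos (fun x => (hgd x).differentiableAt)
    intro x
    rw [(hgd x).deriv]
    have hex := Real.exp_pos x
    have hx := hpos x
    have key : 4 * (p * Real.exp x * (1 - p)) ≤ (h x) ^ 2 := by
      simp only [hh]; nlinarith [sq_nonneg (p * Real.exp x - (1 - p))]
    have : p * Real.exp x * (1 - p) / (h x) ^ 2 ≤ 1 / 4 := by
      rw [div_le_div_iff₀ (by positivity) (by norm_num)]
      nlinarith
    linarith
  have hg0 : g 0 = 0 := by simp [hg, hh]
  have hf0 : f 0 = 0 := by simp [hf, hh]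
  have hfle : f l ≤ 0 := by
    have hdiff : Differentiable ℝ f := fun x => (hfd x).differentiableAt
    rcases le_total l 0 with hl | hl
    · have hmono : MonotoneOn f (Set.Iic 0) := by
        apply monotoneOn_of_deriv_nonneg (convex_Iic 0) hdiff.continuous.continuousOn
          hdiff.differentiableOn
        intro x hx
        rw [interior_Iic] at hx
        rw [(hfd x).deriv]
        have := hganti (le_of_lt hx)
        rw [hg0] at this; linarith
      have := hmono (Set.mem_Iic.2 hl) (Set.mem_Iic.2 le_rfl) hl
      rw [hf0] at this; exact this
    · have hmono : AntitoneOn f (Set.Ici 0) := by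
        apply antitoneOn_of_deriv_nonpos (convex_Ici 0) hdiff.continuous.continuousOn
          hdiff.differentiableOn
        intro x hx
        rw [interior_Ici] at hx
        rw [(hfd x).deriv]
        have := hganti (le_of_lt hx)
        rw [hg0] at this; linarith
      have := hmono (Set.mem_Ici.2 le_rfl) (Set.mem_Ici.2 hl) hl
      rw [hf0] at this; exact this
  have : Real.log (h l) ≤ p * l + l ^ 2 / 8 := by
    simp only [hf] at hfle; linarith
  have := (Real.log_le_iff_le_exp (hpos l)).1 this
  simpa [hh, mul_comm] using this

lemma chernoff_count {V : Type*} [Fintype V] [DecidableEq V] [Nonempty V]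
    (T : Finset V) (t : ℕ) (a : ℝ) (ha : 0 < a) :
    ((Finset.univ.filter (fun U : Fin t → V =>
        (t : ℝ) * ((T.card : ℝ) / (Fintype.card V) + a)
          ≤ ((Finset.univ.filter (fun i => U i ∈ T)).card : ℝ))).card : ℝ)
      ≤ (Fintype.card V : ℝ) ^ t * Real.exp (-2 * a ^ 2 * t) := by
  set m : ℕ := Fintype.card V with hm
  have hm0 : 0 < m := Fintype.card_pos
  set k : ℕ := T.card with hk
  have hkm : k ≤ m := Finset.card_le_card (Finset.subset_univ T) |>.trans_eq (by simp [hm])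
  set p : ℝ := (k : ℝ) / m with hp
  have hp0 : 0 ≤ p := by positivity
  have hp1 : p ≤ 1 := by
    rw [hp, div_le_one (by exact_mod_cast hm0)]
    exact_mod_cast hkm
  set l : ℝ := 4 * a with hl
  set c : (Fin t → V) → ℕ := fun U => (Finset.univ.filter (fun i => U i ∈ T)).card with hc
  -- step 1: card ≤ sum of exp over all U
  have step1 : ((Finset.univ.filter (fun U : Fin t → V =>
        (t : ℝ) * (p + a) ≤ (c U : ℝ))).card : ℝ)
      ≤ ∑ U : Fin t → V, Real.exp (l * ((c U : ℝ) - t * (p + a))) := by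
    rw [Finset.card_eq_sum_ones, Nat.cast_sum]
    refine le_trans (Finset.sum_le_sum ?_) (Finset.sum_le_sum_of_subset_of_nonneg
      (Finset.filter_subset _ _) (fun U _ _ => (Real.exp_pos _).le))
    intro U hU
    rw [Finset.mem_filter] at hU
    simp only [Nat.cast_one]
    rw [← Real.exp_zero]
    apply Real.exp_le_exp.2
    have : (0:ℝ) ≤ (c U : ℝ) - t * (p + a) := by linarith [hU.2]
    nlinarith
  -- step 2: factorize the sum
  have step2 : ∑ U : Fin t → V, Real.exp (l * ((c U : ℝ) - t * (p + a)))
      = Real.exp (- (l * (t * (p + a)))) * ((k : ℝ) * Real.exp l + ((m : ℝ) - k)) ^ t := by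
    have expand : ∀ U : Fin t → V, Real.exp (l * ((c U : ℝ) - t * (p + a)))
        = Real.exp (- (l * (t * (p + a)))) * ∏ i : Fin t, (if U i ∈ T then Real.exp l else 1) := by
      intro U
      have hcU : (c U : ℝ) = ∑ i : Fin t, (if U i ∈ T then (1:ℝ) else 0) := by
        simp only [hc, Finset.card_filter, Nat.cast_sum, apply_ite (Nat.cast : ℕ → ℝ),
          Nat.cast_one, Nat.cast_zero]
      rw [mul_sub, Real.exp_sub, Real.exp_neg]
      rw [div_eq_mul_inv, mul_comm]
      congr 1
      rw [hcU, Finset.mul_sum, Real.exp_sum]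
      apply Finset.prod_congr rfl
      intro i _
      split <;> simp
    rw [Finset.sum_congr rfl (fun U _ => expand U), ← Finset.mul_sum]
    congr 1
    have : ∑ U : Fin t → V, ∏ i : Fin t, (if U i ∈ T then Real.exp l else 1)
        = ∏ _i : Fin t, ∑ v : V, (if v ∈ T then Real.exp l else 1) := by
      rw [Finset.prod_univ_sum]
      rw [Fintype.piFinset_univ]
    rw [this, Finset.prod_const, Finset.card_univ, Fintype.card_fin]
    congr 1
    rw [Finset.sum_ite, Finset.sum_const, Finset.sum_const]
    have h1 : Finset.univ.filter (fun v => v ∈ T) = T := by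
      ext v; simp
    have h2 : (Finset.univ.filter (fun v => ¬ v ∈ T)).card = m - k := by
      rw [Finset.filter_not, h1, Finset.card_univ_diff]
    simp only [smul_eq_mul, nsmul_eq_mul, mul_one]
    rw [h1, h2]
    push_cast [Nat.cast_sub hkm]
    ring
  -- step 3: bound the factorized form
  have hbase0 : (0:ℝ) ≤ (k : ℝ) * Real.exp l + ((m : ℝ) - k) := by
    have : (k:ℝ) ≤ m := by exact_mod_cast hkm
    have := Real.exp_pos l
    nlinarith [hp0, Nat.cast_nonneg (α := ℝ) k]
  have step3 : ((k : ℝ) * Real.exp l + ((m : ℝ) - k)) ^ t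
      ≤ ((m:ℝ) * Real.exp (l * p + l ^ 2 / 8)) ^ t := by
    apply pow_le_pow_left₀ hbase0
    have hmR : (0:ℝ) < m := by exact_mod_cast hm0
    have key := bernoulli_mgf_le hp0 hp1 l
    have heq : (k : ℝ) * Real.exp l + ((m : ℝ) - k) = m * (p * Real.exp l + (1 - p)) := by
      rw [hp]; field_simp
    rw [heq]
    exact mul_le_mul_of_nonneg_left key hmR.le
  calc ((Finset.univ.filter (fun U : Fin t → V =>
        (t : ℝ) * (p + a) ≤ (c U : ℝ))).card : ℝ)
      ≤ Real.exp (- (l * (t * (p + a)))) * ((k : ℝ) * Real.exp l + ((m : ℝ) - k)) ^ t := by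
        rw [← step2]; exact step1
    _ ≤ Real.exp (- (l * (t * (p + a)))) * ((m:ℝ) * Real.exp (l * p + l ^ 2 / 8)) ^ t :=
        mul_le_mul_of_nonneg_left step3 (Real.exp_pos _).le
    _ = (m:ℝ) ^ t * Real.exp (-2 * a ^ 2 * t) := by
        rw [mul_pow, ← Real.exp_nat_mul, ← mul_assoc, mul_comm (Real.exp _), mul_assoc,
          ← Real.exp_add]
        congr 1
        simp only [hl]
        ring

lemma chernoff_abs {V : Type*} [Fintype V] [DecidableEq V] [Nonempty V]
    (T : Finset V) (t : ℕ) (ht : 0 < t) (a : ℝ) (ha : 0 < a) :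
    ((Finset.univ.filter (fun U : Fin t → V =>
        a < |((Finset.univ.filter (fun i => U i ∈ T)).card : ℝ) / t
          - (T.card : ℝ) / (Fintype.card V)|)).card : ℝ)
      ≤ 2 * (Fintype.card V : ℝ) ^ t * Real.exp (-2 * a ^ 2 * t) := by
  set m : ℕ := Fintype.card V with hm
  have hm0 : 0 < m := Fintype.card_pos
  have hmR : (0:ℝ) < m := by exact_mod_cast hm0
  have htR : (0:ℝ) < t := by exact_mod_cast ht
  set E := Finset.univ.filter (fun U : Fin t → V =>
        a < |((Finset.univ.filter (fun i => U i ∈ T)).card : ℝ) / t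
          - (T.card : ℝ) / m|) with hE
  set E1 := Finset.univ.filter (fun U : Fin t → V =>
        (t : ℝ) * ((T.card : ℝ) / m + a)
          ≤ ((Finset.univ.filter (fun i => U i ∈ T)).card : ℝ)) with hE1
  set E2 := Finset.univ.filter (fun U : Fin t → V =>
        (t : ℝ) * ((Tᶜ.card : ℝ) / m + a)
          ≤ ((Finset.univ.filter (fun i => U i ∈ Tᶜ)).card : ℝ)) with hE2
  have hsub : E ⊆ E1 ∪ E2 := by
    intro U hU
    rw [hE, Finset.mem_filter] at hU
    obtain ⟨-, habs⟩ := hU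
    set kR : ℝ := (T.card : ℝ) with hkR
    have hkm : kR ≤ m := by
      rw [hkR]; exact_mod_cast Finset.card_le_univ T
    set c : ℕ := (Finset.univ.filter (fun i => U i ∈ T)).card with hc
    rw [Finset.mem_union]
    rcases lt_abs.1 habs with hcase | hcase
    · left
      rw [hE1, Finset.mem_filter]
      refine ⟨Finset.mem_univ _, ?_⟩
      have e : (c:ℝ)/t - kR/m = ((c:ℝ)*m - kR*t)/(t*m) := by field_simp
      rw [e, lt_div_iff₀ (by positivity)] at hcase
      have e2 : (t:ℝ)*(kR/m + a) = ((t:ℝ)*kR + a*t*m)/m := by field_simp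
      rw [e2, div_le_iff₀ hmR]
      nlinarith
    · right
      rw [hE2, Finset.mem_filter]
      refine ⟨Finset.mem_univ _, ?_⟩
      rw [neg_sub] at hcase
      have e : kR/m - (c:ℝ)/t = (kR*t - (c:ℝ)*m)/(t*m) := by field_simp
      rw [e, lt_div_iff₀ (by positivity)] at hcase
      have hfc : Finset.univ.filter (fun i => U i ∈ Tᶜ)
          = Finset.univ.filter (fun i => ¬ U i ∈ T) := by
        apply Finset.filter_congr; intro i _; simp
      have hcc : c + (Finset.univ.filter (fun i => ¬ U i ∈ T)).card = t := by
        simp [hc, Finset.card_filter_add_card_filter_not]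
      have hcompl : ((Tᶜ.card : ℕ) : ℝ) = (m:ℝ) - kR := by
        rw [Finset.card_compl, hkR, Nat.cast_sub (Finset.card_le_univ T)]
      rw [hfc, hcompl]
      have hcR : ((Finset.univ.filter (fun i => ¬ U i ∈ T)).card : ℝ) = (t:ℝ) - c := by
        have := hcc
        push_cast [← this]
        ring
      rw [hcR]
      have e2 : (t:ℝ)*(((m:ℝ) - kR)/m + a) = ((t:ℝ)*((m:ℝ)-kR) + a*t*m)/m := by
        field_simp
      rw [e2, div_le_iff₀ hmR]
      nlinarith
  calc ((E.card : ℕ) : ℝ) ≤ ((E1 ∪ E2).card : ℝ) := by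
        exact_mod_cast Finset.card_le_card hsub
    _ ≤ ((E1.card : ℝ) + E2.card) := by
        exact_mod_cast Finset.card_union_le E1 E2
    _ ≤ (m : ℝ) ^ t * Real.exp (-2 * a ^ 2 * t) + (m : ℝ) ^ t * Real.exp (-2 * a ^ 2 * t) := by
        apply add_le_add
        · exact chernoff_count T t a ha
        · exact chernoff_count Tᶜ t a ha
    _ = 2 * (m : ℝ) ^ t * Real.exp (-2 * a ^ 2 * t) := by ring

lemma sampleMeasure_coe_finset (V : Type*) [Fintype V] [Nonempty V] [DecidableEq V]
    [MeasurableSpace V] [MeasurableSingletonClass V] (t : ℕ) (F : Finset (Fin t → V)) :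
    sampleMeasure V t ↑F
      = ENNReal.ofReal ((F.card : ℝ) / (Fintype.card V : ℝ) ^ t) := by
  have hm0 : 0 < Fintype.card V := Fintype.card_pos
  have hsingle : ∀ U : Fin t → V,
      sampleMeasure V t {U} = ((Fintype.card V : ℝ≥0∞)⁻¹) ^ t := by
    intro U
    rw [sampleMeasure, ← Set.univ_pi_singleton, Measure.pi_pi]
    have : ∀ i : Fin t, (PMF.uniformOfFintype V).toMeasure {U i}
        = (Fintype.card V : ℝ≥0∞)⁻¹ := by
      intro i
      rw [PMF.toMeasure_apply_singleton _ _ (measurableSet_singleton _),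
        PMF.uniformOfFintype_apply]
    rw [Finset.prod_congr rfl (fun i _ => this i), Finset.prod_const, Finset.card_univ,
      Fintype.card_fin]
  have hdecomp : (↑F : Set (Fin t → V)) = ⋃ U ∈ F, {U} := by
    ext x; simp
  rw [hdecomp, measure_biUnion_finset ?_ (fun U _ => measurableSet_singleton U)]
  · rw [Finset.sum_congr rfl (fun U _ => hsingle U), Finset.sum_const, nsmul_eq_mul]
    rw [ENNReal.ofReal_div_of_pos (by positivity), ENNReal.ofReal_natCast,
      ENNReal.ofReal_pow (Nat.cast_nonneg _), ENNReal.ofReal_natCast,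
      div_eq_mul_inv, ENNReal.inv_pow]
  · intro x _ y _ hxy
    simp [Function.onFun, Set.disjoint_singleton_left, hxy]

end Aux

theorem stmt8 {V : Type*} [Fintype V] [DecidableEq V] [Nonempty V]
    [MeasurableSpace V] [MeasurableSingletonClass V]
    (Adj : V → V → Prop) [DecidableRel Adj]
    (hloopless : ∀ v, ¬ Adj v v)
    (A B C : Finset V)
    (hAB : Disjoint A B) (hAC : Disjoint A C) (hBC : Disjoint B C)
    (hcover : A ∪ B ∪ C = (Finset.univ : Finset V))
    (v : V)
    (ε δ : ℝ) (hε : 0 < ε) (hε1 : ε ≤ 1) (hδ0 : 0 < δ) (hδ1 : δ < 1)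
    (t : ℕ) (ht : 0 < t) (htlb : (8 / ε ^ 2) * Real.log (32 / (ε * δ)) ≤ (t : ℝ)) :
    sampleMeasure V t
        {U | ∃ S : Finset V, (S = A ∪ C ∨ S = B ∪ C) ∧
          ε / 4 <
            |((Finset.univ.filter (fun i : Fin t => U i ∈ (inNbrs Adj v) ∩ S)).card : ℝ) / t
              - (((inNbrs Adj v) ∩ S).card : ℝ) / (Fintype.card V)|}
        ≤ ENNReal.ofReal (4 * Real.exp (-(ε ^ 2 * t) / 8)) ∧
      4 * Real.exp (-(ε ^ 2 * t) / 8) ≤ ε * δ / 8 := by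
  classical
  have hm0 : 0 < Fintype.card V := Fintype.card_pos
  have hmR : (0:ℝ) < Fintype.card V := by exact_mod_cast hm0
  have ha : (0:ℝ) < ε / 4 := by linarith
  constructor
  · -- probability bound
    set T1 : Finset V := (inNbrs Adj v) ∩ (A ∪ C) with hT1
    set T2 : Finset V := (inNbrs Adj v) ∩ (B ∪ C) with hT2
    set P1 : (Fin t → V) → Prop := fun U =>
      ε / 4 < |((Finset.univ.filter (fun i : Fin t => U i ∈ T1)).card : ℝ) / t
        - (T1.card : ℝ) / (Fintype.card V)| with hP1
    set P2 : (Fin t → V) → Prop := fun U =>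
      ε / 4 < |((Finset.univ.filter (fun i : Fin t => U i ∈ T2)).card : ℝ) / t
        - (T2.card : ℝ) / (Fintype.card V)| with hP2
    set F : Finset (Fin t → V) := Finset.univ.filter (fun U => P1 U ∨ P2 U) with hF
    have hset : {U : Fin t → V | ∃ S : Finset V, (S = A ∪ C ∨ S = B ∪ C) ∧
          ε / 4 <
            |((Finset.univ.filter (fun i : Fin t => U i ∈ (inNbrs Adj v) ∩ S)).card : ℝ) / t
              - (((inNbrs Adj v) ∩ S).card : ℝ) / (Fintype.card V)|} = ↑F := by
      ext U
      simp only [hF, Set.mem_setOf_eq, Finset.coe_filter, Finset.mem_univ, true_and]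
      constructor
      · rintro ⟨S, hS | hS, h⟩
        · subst hS; exact Or.inl h
        · subst hS; exact Or.inr h
      · rintro (h | h)
        · exact ⟨A ∪ C, Or.inl rfl, h⟩
        · exact ⟨B ∪ C, Or.inr rfl, h⟩
    rw [hset, sampleMeasure_coe_finset]
    apply ENNReal.ofReal_le_ofReal
    rw [div_le_iff₀ (by positivity)]
    have hsplit : F ⊆ Finset.univ.filter P1 ∪ Finset.univ.filter P2 := by
      intro U hU
      rw [hF, Finset.mem_filter] at hU
      rcases hU.2 with h | h
      · exact Finset.mem_union_left _ (Finset.mem_filter.2 ⟨Finset.mem_univ _, h⟩)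
      · exact Finset.mem_union_right _ (Finset.mem_filter.2 ⟨Finset.mem_univ _, h⟩)
    have hb1 := chernoff_abs T1 t ht (ε/4) ha
    have hb2 := chernoff_abs T2 t ht (ε/4) ha
    have hexp : Real.exp (-2 * (ε/4) ^ 2 * t) = Real.exp (-(ε ^ 2 * t) / 8) := by
      congr 1; ring
    calc ((F.card : ℕ) : ℝ) ≤ (((Finset.univ.filter P1 ∪ Finset.univ.filter P2).card : ℕ) : ℝ) := by
          exact_mod_cast Finset.card_le_card hsplit
      _ ≤ (((Finset.univ.filter P1).card : ℕ) : ℝ) + ((Finset.univ.filter P2).card : ℕ) := by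
          exact_mod_cast Finset.card_union_le _ _
      _ ≤ 2 * (Fintype.card V : ℝ) ^ t * Real.exp (-2 * (ε/4) ^ 2 * t)
            + 2 * (Fintype.card V : ℝ) ^ t * Real.exp (-2 * (ε/4) ^ 2 * t) := add_le_add hb1 hb2
      _ = 4 * Real.exp (-(ε ^ 2 * t) / 8) * (Fintype.card V : ℝ) ^ t := by
          rw [hexp]; ring
  · -- numeric bound
    have h32 : (0:ℝ) < 32 / (ε * δ) := by positivity
    have hε2 : (0:ℝ) < ε ^ 2 := by positivity
    have hlog : Real.log (32 / (ε * δ)) ≤ ε ^ 2 * t / 8 := by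
      have h := mul_le_mul_of_nonneg_right htlb (by positivity : (0:ℝ) ≤ ε ^ 2 / 8)
      have e : 8 / ε ^ 2 * Real.log (32 / (ε * δ)) * (ε ^ 2 / 8)
          = Real.log (32 / (ε * δ)) := by field_simp
      rw [e] at h
      linarith [h]
    have hexp : Real.exp (-(ε ^ 2 * t) / 8) ≤ ε * δ / 32 := by
      have h1 : Real.exp (-(ε ^ 2 * t) / 8) ≤ Real.exp (-(Real.log (32 / (ε * δ)))) := by
        apply Real.exp_le_exp.2
        linarith
      rw [Real.exp_neg, Real.exp_log h32, inv_div] at h1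
      linarith [h1]
    linarith
end

section
/- Let G=(V,E) be a digraph on n vertices, r ≥ 0 an integer, and ε ∈ (0,1] a real number. Let (A,B,C) be a partition of V with A and B nonempty such that neither A nor B is r-reachable. Let W ⊆ V be a set with |W| ≤ εn/4, and let (A',B',C') be a partition of V such that for every vertex v ∉ W: (i) if v ∈ A then v ∈ A'; (ii) if v ∈ B then v ∈ B'; (iii) if v ∈ A' then |N_in(v) ∩ (B∪C)| < r + εn/2; and (iv) if v ∈ B' then |N_in(v) ∩ (A∪C)| < r + εn/2. Then the set Γ_{A'} := {v ∈ A' : |N_in(v) ∩ (V\A')| ≥ r + 3εn/4} satisfies Γ_{A'} ⊆ W, hence |Γ_{A'}| ≤ εn/4; and symmetrically Γ_{B'} := {v ∈ B' : |N_in(v) ∩ (V\B')| ≥ r + 3εn/4} satisfies Γ_{B'} ⊆ W, hence |Γ_{B'}| ≤ εn/4. -/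
/-- The set of in-neighbors of `v`: vertices `u` with an edge directed from `u` to `v`. -/
def inNbrsSet {V : Type*} (Adj : V → V → Prop) (v : V) : Set V :=
  {u | Adj u v}

/-- A nonempty set `S` is `r`-reachable if some `v ∈ S` has at least `r` in-neighbors
outside `S`. -/
def RReachableSet {V : Type*} (Adj : V → V → Prop) (r : ℕ) (S : Set V) : Prop :=
  ∃ v ∈ S, r ≤ (inNbrsSet Adj v \ S).ncard

/-- `Gamma Adj r ε A'` is the set of vertices of `A'` having at least `r + 3εn/4`
in-neighbors outside `A'`. -/
def Gamma {V : Type*} [Fintype V] (Adj : V → V → Prop) (r : ℕ) (ε : ℝ) (A' : Set V) :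
    Set V :=
  {v ∈ A' | (r : ℝ) + 3 * ε * (Fintype.card V) / 4 ≤ ((inNbrsSet Adj v \ A').ncard : ℝ)}

/-!
The in-neighbours of a vertex `v ∈ A' \ W` outside `A'` lie either in `A \ A' ⊆ W`, at most
`εn/4` of them, or in the complement of `A`, fewer than `r + εn/2` of them by (iii); together
fewer than `r + 3εn/4`, so `v ∉ Γ_{A'}`.
-/

section

variable {V : Type*}

lemma Set.diff_subset_inter_union_of_diff_subset {S A D W A' : Set V}
    (hcover : A ∪ D = Set.univ) (hA : A \ W ⊆ A') :
    S \ A' ⊆ S ∩ D ∪ W := by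
  rintro u ⟨huS, huA'⟩
  by_cases huW : u ∈ W
  · exact Or.inr huW
  have huD : u ∈ D := by
    have hu : u ∈ A ∪ D := hcover ▸ Set.mem_univ u
    exact hu.resolve_left fun huA ↦ huA' (hA ⟨huA, huW⟩)
  exact Or.inl ⟨huS, huD⟩

lemma ncard_diff_le_ncard_inter_add_ncard [Finite V] {S A D W A' : Set V}
    (hcover : A ∪ D = Set.univ) (hA : A \ W ⊆ A') :
    (S \ A').ncard ≤ (S ∩ D).ncard + W.ncard :=
  (Set.ncard_le_ncard (Set.diff_subset_inter_union_of_diff_subset hcover hA)).trans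
    (Set.ncard_union_le _ _)

variable [Fintype V] (Adj : V → V → Prop) (r : ℕ) {ε : ℝ}

lemma Gamma_subset {A D W A' : Set V}
    (hcover : A ∪ D = Set.univ)
    (hW : (W.ncard : ℝ) ≤ ε * (Fintype.card V) / 4)
    (hA : ∀ v ∉ W, v ∈ A → v ∈ A')
    (hA' : ∀ v ∉ W, v ∈ A' →
      (((inNbrsSet Adj v ∩ D).ncard : ℝ) < (r : ℝ) + ε * (Fintype.card V) / 2)) :
    Gamma Adj r ε A' ⊆ W := by
  rintro v ⟨hvA', hmany⟩
  by_contra hvW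
  have hfew : ((inNbrsSet Adj v \ A').ncard : ℝ) ≤
      ((inNbrsSet Adj v ∩ D).ncard : ℝ) + W.ncard := by
    exact_mod_cast ncard_diff_le_ncard_inter_add_ncard hcover fun u ⟨huA, huW⟩ ↦ hA u huW huA
  linarith [hA' v hvW hvA']

lemma Gamma_subset_and_ncard_le {A D W A' : Set V}
    (hcover : A ∪ D = Set.univ)
    (hW : (W.ncard : ℝ) ≤ ε * (Fintype.card V) / 4)
    (hA : ∀ v ∉ W, v ∈ A → v ∈ A')
    (hA' : ∀ v ∉ W, v ∈ A' →
      (((inNbrsSet Adj v ∩ D).ncard : ℝ) < (r : ℝ) + ε * (Fintype.card V) / 2)) :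
    Gamma Adj r ε A' ⊆ W ∧ ((Gamma Adj r ε A').ncard : ℝ) ≤ ε * (Fintype.card V) / 4 := by
  have hsub := Gamma_subset Adj r hcover hW hA hA'
  exact ⟨hsub, le_trans (by exact_mod_cast Set.ncard_le_ncard hsub) hW⟩

end

theorem stmt9_general {V : Type*} [Fintype V]
    (Adj : V → V → Prop)
    (r : ℕ) (ε : ℝ)
    (A B C : Set V)
    (hcover : A ∪ B ∪ C = Set.univ)
    (W : Set V) (hW : (W.ncard : ℝ) ≤ ε * (Fintype.card V) / 4)
    (A' B' : Set V)
    (h1 : ∀ v ∉ W, v ∈ A → v ∈ A')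
    (h2 : ∀ v ∉ W, v ∈ B → v ∈ B')
    (h3 : ∀ v ∉ W, v ∈ A' →
      (((inNbrsSet Adj v ∩ (B ∪ C)).ncard : ℝ) < (r : ℝ) + ε * (Fintype.card V) / 2))
    (h4 : ∀ v ∉ W, v ∈ B' →
      (((inNbrsSet Adj v ∩ (A ∪ C)).ncard : ℝ) < (r : ℝ) + ε * (Fintype.card V) / 2)) :
    (Gamma Adj r ε A' ⊆ W ∧
      ((Gamma Adj r ε A').ncard : ℝ) ≤ ε * (Fintype.card V) / 4) ∧
    (Gamma Adj r ε B' ⊆ W ∧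
      ((Gamma Adj r ε B').ncard : ℝ) ≤ ε * (Fintype.card V) / 4) := by
  have hcoverA : A ∪ (B ∪ C) = Set.univ := by rw [← hcover, Set.union_assoc]
  have hcoverB : B ∪ (A ∪ C) = Set.univ := by rw [← hcover]; ac_rfl
  exact ⟨Gamma_subset_and_ncard_le Adj r hcoverA hW h1 h3,
    Gamma_subset_and_ncard_le Adj r hcoverB hW h2 h4⟩

theorem stmt9 {V : Type*} [Fintype V]
    (Adj : V → V → Prop)
    (hloopless : ∀ v, ¬ Adj v v)
    (r : ℕ) (ε : ℝ) (hε : 0 < ε) (hε1 : ε ≤ 1)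
    (A B C : Set V)
    (hAB : Disjoint A B) (hAC : Disjoint A C) (hBC : Disjoint B C)
    (hcover : A ∪ B ∪ C = Set.univ)
    (hA : A.Nonempty) (hB : B.Nonempty)
    (hAnr : ¬ RReachableSet Adj r A) (hBnr : ¬ RReachableSet Adj r B)
    (W : Set V) (hW : (W.ncard : ℝ) ≤ ε * (Fintype.card V) / 4)
    (A' B' C' : Set V)
    (hAB' : Disjoint A' B') (hAC' : Disjoint A' C') (hBC' : Disjoint B' C')
    (hcover' : A' ∪ B' ∪ C' = Set.univ)
    (h1 : ∀ v ∉ W, v ∈ A → v ∈ A')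
    (h2 : ∀ v ∉ W, v ∈ B → v ∈ B')
    (h3 : ∀ v ∉ W, v ∈ A' →
      (((inNbrsSet Adj v ∩ (B ∪ C)).ncard : ℝ) < (r : ℝ) + ε * (Fintype.card V) / 2))
    (h4 : ∀ v ∉ W, v ∈ B' →
      (((inNbrsSet Adj v ∩ (A ∪ C)).ncard : ℝ) < (r : ℝ) + ε * (Fintype.card V) / 2)) :
    (Gamma Adj r ε A' ⊆ W ∧
      ((Gamma Adj r ε A').ncard : ℝ) ≤ ε * (Fintype.card V) / 4) ∧
    (Gamma Adj r ε B' ⊆ W ∧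
      ((Gamma Adj r ε B').ncard : ℝ) ≤ ε * (Fintype.card V) / 4) :=
  stmt9_general Adj r ε A B C hcover W hW A' B' h1 h2 h3 h4
end
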